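/- Let f, g : [0,1] → ℝ be continuous functions. Then for every polynomial expression P(f,g) in f and g with real coefficients (i.e., every element of the ℝ-subalgebra of C[0,1] generated by f and g), the upper box dimension of the graph of P(f,g) satisfies dim_B̄ G(P(f,g)) ≤ max{dim_B̄ G(f), dim_B̄ G(g)}. -/

import Mathlib

/-!
Cut `[0,1]` into columns of width `δ`. Up to a bounded factor, covering a continuous graph by
`δ`-balls takes `∑ᵢ (oscᵢ / δ + 1)` of them, where `oscᵢ` is the oscillation on the `i`-th column:
stacking balls over each column gives the upper bound, and since the image of a column is an
interval, a one-dimensional volume count gives the lower bound. Every `P` in the algebra generated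
by `f` and `g` satisfies `|P x - P y| ≤ L (|f x - f y| + |g x - g y|)`, so its column oscillations
are dominated by those of `f` and `g`. Hence `N_δ(G P) ≤ C (N_δ(G f) + N_δ(G g))`, and the
constant `C` disappears in `log N_δ / -log δ` as `δ → 0`.
-/

open Set Filter Metric

noncomputable def coverNum {α : Type*} [PseudoMetricSpace α] (F : Set α) (δ : ℝ) : ℕ :=
  sInf {n : ℕ | ∃ t : Finset α, t.card = n ∧ F ⊆ ⋃ p ∈ t, Metric.closedBall p δ}

noncomputable def upperBoxDim {α : Type*} [PseudoMetricSpace α] (F : Set α) : ℝ :=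
  Filter.limsup (fun δ : ℝ => Real.log (coverNum F δ) / -Real.log δ)
    (nhdsWithin (0 : ℝ) (Set.Ioi 0))

noncomputable def lowerBoxDim {α : Type*} [PseudoMetricSpace α] (F : Set α) : ℝ :=
  Filter.liminf (fun δ : ℝ => Real.log (coverNum F δ) / -Real.log δ)
    (nhdsWithin (0 : ℝ) (Set.Ioi 0))

/-- Graph of `f` over the set `X`. -/
def fnGraphOn (f : ℝ → ℝ) (X : Set ℝ) : Set (ℝ × ℝ) := (fun x => (x, f x)) '' X

/-- Graph of `f` over `[0,1]`. -/
def G (f : ℝ → ℝ) : Set (ℝ × ℝ) := fnGraphOn f (Set.Icc 0 1)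

/-- Graph of a continuous map on `[0,1]`. -/
def graphC (f : C(↥(Set.Icc (0:ℝ) 1), ℝ)) : Set (ℝ × ℝ) :=
  Set.range fun x : ↥(Set.Icc (0:ℝ) 1) => ((x : ℝ), f x)

open MeasureTheory Topology

section CoverNum

variable {α : Type*} [PseudoMetricSpace α] {F : Set α} {δ : ℝ}

lemma coverNum_le_card (t : Finset α) (ht : F ⊆ ⋃ p ∈ t, closedBall p δ) :
    coverNum F δ ≤ t.card :=
  Nat.sInf_le ⟨t, rfl, ht⟩

lemma IsCompact.exists_finset_card_eq_coverNum (hF : IsCompact F) (hδ : 0 < δ) :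
    ∃ t : Finset α, t.card = coverNum F δ ∧ F ⊆ ⋃ p ∈ t, closedBall p δ := by
  obtain ⟨t, ht⟩ := hF.elim_finite_subcover (fun p => ball p δ) (fun _ => isOpen_ball)
    fun x _ => mem_iUnion.2 ⟨x, mem_ball_self hδ⟩
  exact Nat.sInf_mem (s := {n | ∃ t : Finset α, t.card = n ∧ F ⊆ ⋃ p ∈ t, closedBall p δ})
    ⟨t.card, t, rfl, ht.trans (iUnion₂_mono fun _ _ => ball_subset_closedBall)⟩

end CoverNum

lemma tendsto_div_neg_log_nhdsGT_zero (c : ℝ) :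
    Tendsto (fun δ => c / -Real.log δ) (𝓝[>] 0) (𝓝 0) :=
  tendsto_const_nhds.div_atTop (tendsto_neg_atBot_atTop.comp Real.tendsto_log_nhdsGT_zero)

lemma eventually_neg_log_pos : ∀ᶠ δ in 𝓝[>] (0 : ℝ), 0 < -Real.log δ := by
  filter_upwards [Ioo_mem_nhdsGT one_pos] with δ hδ
  exact neg_pos.2 (Real.log_neg hδ.1 hδ.2)

lemma log_div_le_log_mul_div_add_max {a b c C t : ℝ} (ha : 0 ≤ a) (hb : 0 ≤ b) (hc : 0 < c)
    (ht : 0 < t) (h : c ≤ C * (a + b)) :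
    Real.log c / t ≤ Real.log (2 * C) / t + max (Real.log a / t) (Real.log b / t) := by
  have hab : a + b ≤ 2 * max a b := by linarith [le_max_left a b, le_max_right a b]
  have hmax : 0 < max a b := by
    by_contra! hle
    have hab0 : a + b = 0 := by linarith
    rw [hab0, mul_zero] at h
    linarith
  have hC : 0 < C := by nlinarith
  have hlog : Real.log c ≤ Real.log (2 * C) + max (Real.log a) (Real.log b) := by
    calc Real.log c ≤ Real.log (2 * C * max a b) := Real.log_le_log hc (by nlinarith)
      _ = Real.log (2 * C) + Real.log (max a b) := Real.log_mul (by positivity) hmax.ne'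
      _ ≤ Real.log (2 * C) + max (Real.log a) (Real.log b) := by
          rcases le_total a b with hle | hle
          · rw [max_eq_right hle]; linarith [le_max_right (Real.log a) (Real.log b)]
          · rw [max_eq_left hle]; linarith [le_max_left (Real.log a) (Real.log b)]
  rw [max_div_div_right ht.le, ← add_div]
  exact div_le_div_of_nonneg_right hlog ht.le

section BoxDim

variable {α β γ : Type*} [PseudoMetricSpace α] [PseudoMetricSpace β] [PseudoMetricSpace γ]

lemma isBoundedUnder_log_coverNum_div {F : Set α} {K : ℝ} (d : ℕ)
    (h : ∀ᶠ δ in 𝓝[>] 0, (coverNum F δ : ℝ) ≤ K / δ ^ d) :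
    IsBoundedUnder (· ≤ ·) (𝓝[>] 0) fun δ => Real.log (coverNum F δ) / -Real.log δ := by
  refine isBoundedUnder_of_eventually_le (a := d + 1) ?_
  filter_upwards [h, self_mem_nhdsWithin, eventually_neg_log_pos,
    (tendsto_div_neg_log_nhdsGT_zero (Real.log K)).eventually (gt_mem_nhds one_pos)]
    with δ hN hδ ht hK
  rcases eq_or_ne (coverNum F δ) 0 with h0 | h0
  · simp only [h0, Nat.cast_zero, Real.log_zero, zero_div]
    positivity
  have hN0 : (0 : ℝ) < coverNum F δ := by positivity
  have hδd : 0 < δ ^ d := pow_pos hδ d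
  have hK0 : 0 < K := (div_pos_iff_of_pos_right hδd).1 (hN0.trans_le hN)
  calc Real.log (coverNum F δ) / -Real.log δ ≤ Real.log (K / δ ^ d) / -Real.log δ :=
        div_le_div_of_nonneg_right (Real.log_le_log hN0 hN) ht.le
    _ = Real.log K / -Real.log δ + d := by
        have hlog : Real.log δ ≠ 0 := (neg_pos.1 ht).ne
        rw [Real.log_div hK0.ne' hδd.ne', Real.log_pow]
        field_simp
        ring
    _ ≤ d + 1 := by linarith

lemma upperBoxDim_le_max_of_coverNum_le {E : Set α} {A : Set β} {B : Set γ} {C : ℝ}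
    (hA : IsBoundedUnder (· ≤ ·) (𝓝[>] 0) fun δ => Real.log (coverNum A δ) / -Real.log δ)
    (hB : IsBoundedUnder (· ≤ ·) (𝓝[>] 0) fun δ => Real.log (coverNum B δ) / -Real.log δ)
    (hE : ∀ᶠ δ in 𝓝[>] 0, (coverNum E δ : ℝ) ≤ C * (coverNum A δ + coverNum B δ)) :
    upperBoxDim E ≤ max (upperBoxDim A) (upperBoxDim B) := by
  refine le_of_forall_pos_le_add fun ε hε => ?_
  have hA' := eventually_lt_of_limsup_lt (lt_add_of_pos_right (upperBoxDim A) (half_pos hε)) hA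
  have hB' := eventually_lt_of_limsup_lt (lt_add_of_pos_right (upperBoxDim B) (half_pos hε)) hB
  have hC := (tendsto_div_neg_log_nhdsGT_zero (Real.log (2 * C))).eventually
    (gt_mem_nhds (half_pos hε))
  have hnonneg : ∀ᶠ δ in 𝓝[>] (0 : ℝ), 0 ≤ Real.log (coverNum E δ) / -Real.log δ := by
    filter_upwards [eventually_neg_log_pos] with δ ht
    exact div_nonneg (Real.log_natCast_nonneg _) ht.le
  refine limsup_le_of_le (isCoboundedUnder_le_of_eventually_le _ hnonneg) ?_
  filter_upwards [hE, hA', hB', hC, eventually_neg_log_pos] with δ hE hA hB hC ht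
  have hmax := max_lt_max hA hB
  rw [max_add_add_right] at hmax
  rcases eq_or_ne (coverNum E δ) 0 with h0 | h0
  · have hA0 := div_nonneg (Real.log_natCast_nonneg (coverNum A δ)) ht.le
    simp only [h0, Nat.cast_zero, Real.log_zero, zero_div]
    linarith [le_max_left (Real.log (coverNum A δ) / -Real.log δ)
      (Real.log (coverNum B δ) / -Real.log δ)]
  have := log_div_le_log_mul_div_add_max (Nat.cast_nonneg _) (Nat.cast_nonneg _)
    (by positivity) ht hE
  linarith

end BoxDim

lemma IsPreconnected.diam_le_of_subset_biUnion_closedBall {S : Set ℝ} (hSp : IsPreconnected S)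
    (hSc : IsCompact S) {ι : Type*} (s : Finset ι) (c : ι → ℝ) {δ : ℝ} (hδ : 0 ≤ δ)
    (hS : S ⊆ ⋃ j ∈ s, closedBall (c j) δ) :
    diam S ≤ 2 * δ * s.card := by
  rcases S.eq_empty_or_nonempty with rfl | hne
  · rw [diam_empty]
    positivity
  have hIcc : Icc (sInf S) (sSup S) ⊆ S := hSp.Icc_subset (hSc.sInf_mem hne) (hSc.sSup_mem hne)
  rw [← ENNReal.ofReal_le_ofReal_iff (by positivity), Real.diam_eq hSc.isBounded,
    ← Real.volume_Icc]
  calc volume (Icc (sInf S) (sSup S)) ≤ volume (⋃ j ∈ s, closedBall (c j) δ) :=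
        measure_mono (hIcc.trans hS)
    _ ≤ ∑ j ∈ s, volume (closedBall (c j) δ) := measure_biUnion_finset_le s _
    _ = ENNReal.ofReal (2 * δ * s.card) := by
        simp [Real.volume_closedBall, mul_comm]

lemma Icc_subset_biUnion_closedBall {m D δ : ℝ} (hδ : 0 < δ) :
    Icc m (m + D) ⊆
      ⋃ j ∈ Finset.range (⌊D / (2 * δ)⌋₊ + 1), closedBall (m + (2 * j + 1) * δ) δ := by
  intro y hy
  have h2δ : 0 < 2 * δ := by positivity
  set j := ⌊(y - m) / (2 * δ)⌋₊
  have hj : j * (2 * δ) ≤ y - m :=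
    (le_div_iff₀ h2δ).1 (Nat.floor_le (div_nonneg (sub_nonneg.2 hy.1) h2δ.le))
  have hj' : y - m < (j + 1) * (2 * δ) := (div_lt_iff₀ h2δ).1 (Nat.lt_floor_add_one _)
  have hjD : j < ⌊D / (2 * δ)⌋₊ + 1 :=
    Nat.lt_succ_of_le (Nat.floor_le_floor (div_le_div_of_nonneg_right (by linarith [hy.2]) h2δ.le))
  refine mem_iUnion₂.2 ⟨j, Finset.mem_range.2 hjD, ?_⟩
  rw [mem_closedBall, Real.dist_eq, abs_le]
  constructor <;> nlinarith

lemma diam_image_le_of_abs_sub_le {X : Type*} {f g h : X → ℝ} {s : Set X} {L : ℝ} (hL : 0 ≤ L)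
    (hf : Bornology.IsBounded (f '' s)) (hg : Bornology.IsBounded (g '' s))
    (hfgh : ∀ x ∈ s, ∀ y ∈ s, |h x - h y| ≤ L * (|f x - f y| + |g x - g y|)) :
    diam (h '' s) ≤ L * (diam (f '' s) + diam (g '' s)) := by
  refine diam_le_of_forall_dist_le (mul_nonneg hL (add_nonneg diam_nonneg diam_nonneg)) ?_
  rintro _ ⟨x, hx, rfl⟩ _ ⟨y, hy, rfl⟩
  calc dist (h x) (h y) ≤ L * (dist (f x) (f y) + dist (g x) (g y)) := hfgh x hx y hy
    _ ≤ L * (diam (f '' s) + diam (g '' s)) := by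
        gcongr
        · exact dist_le_diam_of_mem hf (mem_image_of_mem f hx) (mem_image_of_mem f hy)
        · exact dist_le_diam_of_mem hg (mem_image_of_mem g hx) (mem_image_of_mem g hy)

lemma card_filter_le_four (s : Finset ℕ) {δ : ℝ} (hδ : 0 < δ) (a : ℝ) :
    (s.filter fun i : ℕ => a - 2 * δ ≤ i * δ ∧ (i : ℝ) * δ ≤ a + δ).card ≤ 4 := by
  set c := ⌈a / δ - 2⌉₊
  calc _ ≤ (Finset.Icc c (c + 3)).card := Finset.card_le_card fun i hi => by
        obtain ⟨-, h1, h2⟩ := Finset.mem_filter.1 hi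
        have hc := Nat.le_ceil (a / δ - 2)
        have hi1 : a / δ - 2 ≤ i := by rw [sub_le_iff_le_add, div_le_iff₀ hδ]; linarith
        have hi2 : (i : ℝ) ≤ a / δ + 1 := by rw [div_add_one hδ.ne', le_div_iff₀ hδ]; linarith
        have hi3 : (i : ℝ) ≤ c + 3 := by linarith
        exact Finset.mem_Icc.2 ⟨Nat.ceil_le.2 hi1, by exact_mod_cast hi3⟩
    _ = 4 := by rw [Nat.card_Icc]; omega

def col (δ : ℝ) (i : ℕ) : Set ℝ := Icc 0 1 ∩ Icc (i * δ) ((i + 1) * δ)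

/-- The number of `δ`-balls stacked over the columns, before rounding; it is comparable to
`coverNum (G h) δ` up to the factor `8`. -/
noncomputable def colCount (h : ℝ → ℝ) (δ : ℝ) : ℝ :=
  ∑ i ∈ Finset.Iic ⌊δ⁻¹⌋₊, (diam (h '' col δ i) / (2 * δ) + 1)

section Columns

variable {δ : ℝ} {i : ℕ} {h : ℝ → ℝ}

lemma mul_mem_col (hδ : 0 < δ) (hi : i ≤ ⌊δ⁻¹⌋₊) : (i : ℝ) * δ ∈ col δ i := by
  refine ⟨⟨by positivity, ?_⟩, le_rfl, by linarith⟩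
  calc (i : ℝ) * δ ≤ δ⁻¹ * δ :=
        mul_le_mul_of_nonneg_right ((Nat.le_floor_iff (by positivity)).1 hi) hδ.le
    _ = 1 := inv_mul_cancel₀ hδ.ne'

lemma exists_mem_col (hδ : 0 < δ) {x : ℝ} (hx : x ∈ Icc (0 : ℝ) 1) :
    ∃ i ≤ ⌊δ⁻¹⌋₊, x ∈ col δ i := by
  refine ⟨⌊x / δ⌋₊, Nat.floor_le_floor ?_, hx, ?_, ?_⟩
  · rw [div_eq_mul_inv]
    exact mul_le_of_le_one_left (by positivity) hx.2
  · exact (le_div_iff₀ hδ).1 (Nat.floor_le (div_nonneg hx.1 hδ.le))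
  · exact ((div_lt_iff₀ hδ).1 (Nat.lt_floor_add_one _)).le

lemma isCompact_graph (hh : ContinuousOn h (Icc 0 1)) : IsCompact (G h) :=
  isCompact_Icc.image_of_continuousOn (continuousOn_id.prodMk hh)

lemma isCompact_image_col (hh : ContinuousOn h (Icc 0 1)) : IsCompact (h '' col δ i) :=
  (isCompact_Icc.inter isCompact_Icc).image_of_continuousOn (hh.mono inter_subset_left)

lemma isPreconnected_image_col (hh : ContinuousOn h (Icc 0 1)) :
    IsPreconnected (h '' col δ i) :=
  ((convex_Icc 0 1).inter (convex_Icc _ _)).isPreconnected.image h (hh.mono inter_subset_left)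

lemma coverNum_graph_le_colCount (hh : ContinuousOn h (Icc 0 1)) (hδ : 0 < δ) :
    (coverNum (G h) δ : ℝ) ≤ colCount h δ := by
  classical
  set m := fun i => sInf (h '' col δ i)
  set k := fun i => ⌊diam (h '' col δ i) / (2 * δ)⌋₊ + 1
  set t := (Finset.Iic ⌊δ⁻¹⌋₊).biUnion fun i =>
    (Finset.range (k i)).image fun j : ℕ => ((i : ℝ) * δ, m i + (2 * j + 1) * δ)
  have hcov : G h ⊆ ⋃ p ∈ t, closedBall p δ := by
    rintro _ ⟨x, hx, rfl⟩
    obtain ⟨i, hi, hxi⟩ := exists_mem_col hδ hx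
    have hbdd := (isCompact_image_col hh (δ := δ) (i := i)).isBounded
    have hy : h x ∈ Icc (m i) (m i + diam (h '' col δ i)) := by
      rw [Real.diam_eq hbdd, add_sub_cancel]
      exact hbdd.subset_Icc_sInf_sSup (mem_image_of_mem h hxi)
    obtain ⟨j, hj, hyj⟩ := mem_iUnion₂.1 (Icc_subset_biUnion_closedBall hδ hy)
    refine mem_iUnion₂.2 ⟨_, Finset.mem_biUnion.2
      ⟨i, Finset.mem_Iic.2 hi, Finset.mem_image_of_mem _ hj⟩, ?_⟩
    rw [mem_closedBall, Prod.dist_eq, max_le_iff, Real.dist_eq, abs_le]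
    exact ⟨⟨by linarith [hxi.2.1], by linarith [hxi.2.2]⟩, hyj⟩
  calc (coverNum (G h) δ : ℝ) ≤ t.card := Nat.cast_le.2 (coverNum_le_card t hcov)
    _ ≤ ∑ i ∈ Finset.Iic ⌊δ⁻¹⌋₊, (k i : ℝ) := by
        exact_mod_cast Finset.card_biUnion_le.trans
          (Finset.sum_le_sum fun i _ => Finset.card_image_le.trans (Finset.card_range _).le)
    _ ≤ colCount h δ := Finset.sum_le_sum fun i _ => by
        simp only [k, Nat.cast_add, Nat.cast_one]
        gcongr
        exact Nat.floor_le (by positivity)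

lemma exists_mem_filter_of_mem_col {t : Finset (ℝ × ℝ)} (ht : G h ⊆ ⋃ p ∈ t, closedBall p δ) {x : ℝ}
    (hx : x ∈ col δ i) :
    ∃ p ∈ t.filter (fun p : ℝ × ℝ => p.1 - 2 * δ ≤ i * δ ∧ i * δ ≤ p.1 + δ),
      dist (h x) p.2 ≤ δ := by
  obtain ⟨p, hp, hxp⟩ := mem_iUnion₂.1 (ht ⟨x, hx.1, rfl⟩)
  rw [mem_closedBall, Prod.dist_eq, max_le_iff, Real.dist_eq] at hxp
  obtain ⟨h1, h2⟩ := abs_le.1 hxp.1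
  exact ⟨p, Finset.mem_filter.2 ⟨hp, by linarith [hx.2.2], by linarith [hx.2.1]⟩, hxp.2⟩

lemma diam_image_col_le (hh : ContinuousOn h (Icc 0 1)) (hδ : 0 ≤ δ) {t : Finset (ℝ × ℝ)}
    (ht : G h ⊆ ⋃ p ∈ t, closedBall p δ) :
    diam (h '' col δ i) ≤
      2 * δ * (t.filter fun p : ℝ × ℝ => p.1 - 2 * δ ≤ i * δ ∧ i * δ ≤ p.1 + δ).card := by
  refine (isPreconnected_image_col hh).diam_le_of_subset_biUnion_closedBall
    (isCompact_image_col hh) _ Prod.snd hδ ?_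
  rintro _ ⟨x, hx, rfl⟩
  obtain ⟨p, hp, hd⟩ := exists_mem_filter_of_mem_col ht hx
  exact mem_iUnion₂.2 ⟨p, hp, hd⟩

lemma colCount_le_coverNum_graph (hh : ContinuousOn h (Icc 0 1)) (hδ : 0 < δ) :
    colCount h δ ≤ 8 * coverNum (G h) δ := by
  classical
  obtain ⟨t, htcard, ht⟩ := (isCompact_graph hh).exists_finset_card_eq_coverNum hδ
  -- `r i p` holds whenever `closedBall p δ` meets the strip over column `i`; a given `p`
  -- passes this test for at most four columns (`card_filter_le_four`).
  let r : ℕ → ℝ × ℝ → Prop := fun i p => p.1 - 2 * δ ≤ i * δ ∧ i * δ ≤ p.1 + δ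
  have hcol : ∀ i ∈ Finset.Iic ⌊δ⁻¹⌋₊,
      diam (h '' col δ i) / (2 * δ) + 1 ≤ 2 * (t.bipartiteAbove r i).card := by
    intro i hi
    have hdiam : diam (h '' col δ i) / (2 * δ) ≤ (t.bipartiteAbove r i).card :=
      (div_le_iff₀ (by positivity)).2 ((diam_image_col_le hh hδ.le ht).trans_eq (mul_comm _ _))
    obtain ⟨p, hp, -⟩ := exists_mem_filter_of_mem_col ht (mul_mem_col hδ (Finset.mem_Iic.1 hi))
    have hone : (1 : ℝ) ≤ (t.bipartiteAbove r i).card := by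
      exact_mod_cast Finset.card_pos.2 ⟨p, hp⟩
    linarith
  have hcount : ∑ i ∈ Finset.Iic ⌊δ⁻¹⌋₊, (t.bipartiteAbove r i).card ≤ 4 * t.card := by
    rw [Finset.sum_card_bipartiteAbove_eq_sum_card_bipartiteBelow]
    exact (Finset.sum_le_sum fun p _ => card_filter_le_four _ hδ p.1).trans
      (by rw [Finset.sum_const, smul_eq_mul, mul_comm])
  calc colCount h δ ≤ ∑ i ∈ Finset.Iic ⌊δ⁻¹⌋₊, 2 * ((t.bipartiteAbove r i).card : ℝ) :=
        Finset.sum_le_sum hcol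
    _ = 2 * (∑ i ∈ Finset.Iic ⌊δ⁻¹⌋₊, (t.bipartiteAbove r i).card : ℕ) := by
        rw [← Finset.mul_sum]
        push_cast
        rfl
    _ ≤ 2 * (4 * t.card : ℕ) := by gcongr
    _ = 8 * coverNum (G h) δ := by
        rw [htcard]
        push_cast
        ring

lemma colCount_le_div_sq (hh : ContinuousOn h (Icc 0 1)) (hδ0 : 0 < δ) (hδ1 : δ ≤ 1) :
    colCount h δ ≤ (diam (h '' Icc 0 1) + 2) / δ ^ 2 := by
  set D := diam (h '' Icc 0 1)
  have hterm : ∀ i, diam (h '' col δ i) / (2 * δ) + 1 ≤ (D + 2) / (2 * δ) := by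
    intro i
    have hD : diam (h '' col δ i) ≤ D :=
      diam_mono (image_mono inter_subset_left) (isCompact_Icc.image_of_continuousOn hh).isBounded
    have h1 : (1 : ℝ) ≤ 2 / (2 * δ) := by
      rw [le_div_iff₀ (by positivity)]
      linarith
    rw [add_div]
    gcongr
  have hn : (⌊δ⁻¹⌋₊ : ℝ) + 1 ≤ 2 / δ := by
    have := Nat.floor_le (inv_nonneg.2 hδ0.le)
    have h1 : (1 : ℝ) ≤ δ⁻¹ := one_le_inv_iff₀.2 ⟨hδ0, hδ1⟩
    rw [div_eq_mul_inv]
    linarith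
  have hD0 : 0 ≤ D := diam_nonneg
  calc colCount h δ ≤ ∑ _i ∈ Finset.Iic ⌊δ⁻¹⌋₊, (D + 2) / (2 * δ) :=
        Finset.sum_le_sum fun i _ => hterm i
    _ = (⌊δ⁻¹⌋₊ + 1) * ((D + 2) / (2 * δ)) := by
        rw [Finset.sum_const, Nat.card_Iic, nsmul_eq_mul]
        push_cast
        rfl
    _ ≤ 2 / δ * ((D + 2) / (2 * δ)) := by gcongr
    _ = (D + 2) / δ ^ 2 := by
        field_simp

lemma colCount_le_of_abs_sub_le {f g : ℝ → ℝ} {L : ℝ} (hL : 0 ≤ L) (hf : ContinuousOn f (Icc 0 1))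
    (hg : ContinuousOn g (Icc 0 1)) (hδ : 0 < δ)
    (hfgh : ∀ x ∈ Icc (0 : ℝ) 1, ∀ y ∈ Icc (0 : ℝ) 1,
      |h x - h y| ≤ L * (|f x - f y| + |g x - g y|)) :
    colCount h δ ≤ (L + 1) * (colCount f δ + colCount g δ) := by
  rw [colCount, colCount, colCount, ← Finset.sum_add_distrib, Finset.mul_sum]
  refine Finset.sum_le_sum fun i _ => ?_
  have hdiam := diam_image_le_of_abs_sub_le hL (isCompact_image_col hf (δ := δ) (i := i)).isBounded
    (isCompact_image_col hg).isBounded fun x hx y hy => hfgh x hx.1 y hy.1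
  have h2δ : (0 : ℝ) < 2 * δ := by positivity
  have hf0 : 0 ≤ diam (f '' col δ i) / (2 * δ) := by positivity
  have hg0 : 0 ≤ diam (g '' col δ i) / (2 * δ) := by positivity
  have hh' : diam (h '' col δ i) / (2 * δ) ≤
      L * (diam (f '' col δ i) / (2 * δ) + diam (g '' col δ i) / (2 * δ)) := by
    rw [← add_div, ← mul_div_assoc]
    exact div_le_div_of_nonneg_right hdiam h2δ.le
  nlinarith

end Columns

section Graph

variable {f g h : ℝ → ℝ}

lemma isBoundedUnder_log_coverNum_graph (hh : ContinuousOn h (Icc 0 1)) :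
    IsBoundedUnder (· ≤ ·) (𝓝[>] 0) fun δ => Real.log (coverNum (G h) δ) / -Real.log δ := by
  refine isBoundedUnder_log_coverNum_div 2 (K := diam (h '' Icc 0 1) + 2) ?_
  filter_upwards [Ioc_mem_nhdsGT one_pos] with δ hδ
  exact (coverNum_graph_le_colCount hh hδ.1).trans (colCount_le_div_sq hh hδ.1 hδ.2)

theorem upperBoxDim_graph_le_max_of_abs_sub_le {L : ℝ} (hL : 0 ≤ L)
    (hf : ContinuousOn f (Icc 0 1)) (hg : ContinuousOn g (Icc 0 1))
    (hh : ContinuousOn h (Icc 0 1))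
    (hfgh : ∀ x ∈ Icc (0 : ℝ) 1, ∀ y ∈ Icc (0 : ℝ) 1,
      |h x - h y| ≤ L * (|f x - f y| + |g x - g y|)) :
    upperBoxDim (G h) ≤ max (upperBoxDim (G f)) (upperBoxDim (G g)) := by
  refine upperBoxDim_le_max_of_coverNum_le (C := 8 * (L + 1))
    (isBoundedUnder_log_coverNum_graph hf) (isBoundedUnder_log_coverNum_graph hg) ?_
  filter_upwards [self_mem_nhdsWithin] with δ (hδ : 0 < δ)
  calc (coverNum (G h) δ : ℝ) ≤ colCount h δ := coverNum_graph_le_colCount hh hδ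
    _ ≤ (L + 1) * (colCount f δ + colCount g δ) := colCount_le_of_abs_sub_le hL hf hg hδ hfgh
    _ ≤ (L + 1) * (8 * coverNum (G f) δ + 8 * coverNum (G g) δ) := by
        gcongr
        · exact colCount_le_coverNum_graph hf hδ
        · exact colCount_le_coverNum_graph hg hδ
    _ = 8 * (L + 1) * (coverNum (G f) δ + coverNum (G g) δ) := by ring

end Graph

lemma exists_abs_sub_le_of_mem_adjoin {X : Type*} [TopologicalSpace X] [CompactSpace X]
    {f g P : C(X, ℝ)} (hP : P ∈ Algebra.adjoin ℝ ({f, g} : Set C(X, ℝ))) :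
    ∃ L : ℝ, 0 ≤ L ∧ ∀ x y, |P x - P y| ≤ L * (|f x - f y| + |g x - g y|) := by
  induction hP using Algebra.adjoin_induction with
  | mem q hq =>
    refine ⟨1, zero_le_one, fun x y => ?_⟩
    rcases hq with rfl | rfl
    · linarith [abs_nonneg (g x - g y)]
    · linarith [abs_nonneg (f x - f y)]
  | algebraMap r => exact ⟨0, le_rfl, fun x y => by simp⟩
  | add p q _ _ hp hq =>
    obtain ⟨L₁, hL₁, hp⟩ := hp
    obtain ⟨L₂, hL₂, hq⟩ := hq
    refine ⟨L₁ + L₂, add_nonneg hL₁ hL₂, fun x y => ?_⟩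
    calc |(p + q) x - (p + q) y| = |(p x - p y) + (q x - q y)| := by
          simp only [ContinuousMap.add_apply]; ring_nf
      _ ≤ |p x - p y| + |q x - q y| := abs_add_le _ _
      _ ≤ (L₁ + L₂) * (|f x - f y| + |g x - g y|) := by linarith [hp x y, hq x y]
  | mul p q _ _ hp hq =>
    obtain ⟨L₁, hL₁, hp⟩ := hp
    obtain ⟨L₂, hL₂, hq⟩ := hq
    refine ⟨‖p‖ * L₂ + ‖q‖ * L₁, by positivity, fun x y => ?_⟩
    have hpx : |p x| ≤ ‖p‖ := by simpa using p.norm_coe_le_norm x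
    have hqy : |q y| ≤ ‖q‖ := by simpa using q.norm_coe_le_norm y
    calc |(p * q) x - (p * q) y| = |p x * (q x - q y) + (p x - p y) * q y| := by
          simp only [ContinuousMap.mul_apply]; ring_nf
      _ ≤ |p x| * |q x - q y| + |p x - p y| * |q y| := by
          rw [← abs_mul, ← abs_mul]; exact abs_add_le _ _
      _ ≤ ‖p‖ * (L₂ * (|f x - f y| + |g x - g y|)) + L₁ * (|f x - f y| + |g x - g y|) * ‖q‖ := by
          gcongr
          · exact hq x y
          · exact hp x y
      _ = (‖p‖ * L₂ + ‖q‖ * L₁) * (|f x - f y| + |g x - g y|) := by ring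

lemma graphC_eq_G_IccExtend (h : C(↥(Icc (0 : ℝ) 1), ℝ)) :
    graphC h = G (IccExtend zero_le_one h) := by
  ext p
  constructor
  · rintro ⟨x, rfl⟩
    exact ⟨x, x.2, by simp⟩
  · rintro ⟨x, hx, rfl⟩
    exact ⟨⟨x, hx⟩, by simp [IccExtend_of_mem zero_le_one h hx]⟩

theorem upperBoxDim_graph_polynomial (f g P : C(↥(Set.Icc (0:ℝ) 1), ℝ))
    (hP : P ∈ Algebra.adjoin ℝ ({f, g} : Set C(↥(Set.Icc (0:ℝ) 1), ℝ))) :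
    upperBoxDim (graphC P) ≤ max (upperBoxDim (graphC f)) (upperBoxDim (graphC g)) := by
  obtain ⟨L, hL, hPfg⟩ := exists_abs_sub_le_of_mem_adjoin hP
  have hcont (h : C(↥(Icc (0 : ℝ) 1), ℝ)) : ContinuousOn (IccExtend zero_le_one h) (Icc 0 1) :=
    (continuous_IccExtend_iff.2 h.continuous).continuousOn
  simp only [graphC_eq_G_IccExtend]
  refine upperBoxDim_graph_le_max_of_abs_sub_le hL (hcont f) (hcont g) (hcont P) fun x hx y hy => ?_
  simpa only [IccExtend_of_mem zero_le_one _ hx, IccExtend_of_mem zero_le_one _ hy] using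
    hPfg ⟨x, hx⟩ ⟨y, hy⟩
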